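/- arXiv:1311.1479 — 4 statements merged into one kernel-verified Lean document; each statement's English description precedes it below -/
import Mathlib

section
/- The Heisenberg surface X in affine 3-space over F_{p^2}, cut out by x - x^p + y z^p - z y^p = 0, contains every line of the form {(a,b,0) + t(b^p, v, 1) : t ∈ F_{p^2}} where a, v ∈ F_p and b ∈ F_{p^2}. -/
/-! Frobenius `x ↦ x ^ p` is a ring endomorphism fixing `a` and `v` and swapping `b` with `b ^ p`
(it has order two on `F_{p^2}`). Applying it to the coordinates of the line, the `x`-term
contributes `t b^p - t^p b`, and the `y z^p - z y^p` term contributes `b t^p - t b^p`, while the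
`v`-contributions `v t^{p+1}` cancel in pairs. -/

theorem GaloisField.pow_prime_pow_prime (p : ℕ) [Fact p.Prime] (b : GaloisField p 2) :
    (b ^ p) ^ p = b := by
  have : Fintype (GaloisField p 2) := Fintype.ofFinite _
  have hcard : Fintype.card (GaloisField p 2) = p ^ 2 := by
    rw [← Nat.card_eq_fintype_card, GaloisField.card p 2 two_ne_zero]
  rw [← pow_mul, ← sq, ← hcard, FiniteField.pow_card]

theorem heisenberg_eq_zero_of_frobenius_fixed {R : Type*} [CommRing R] (p : ℕ) [ExpChar R p]
    {a v b : R} (ha : a ^ p = a) (hv : v ^ p = v) (hb : (b ^ p) ^ p = b) (t : R) :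
    (a + t * b ^ p) - (a + t * b ^ p) ^ p
      + (b + t * v) * t ^ p - t * (b + t * v) ^ p = 0 := by
  rw [add_pow_expChar, add_pow_expChar, mul_pow, mul_pow, hb, ha, hv]
  ring

/-- The Heisenberg surface `x - x^p + y z^p - z y^p = 0` over `F_{p^2}` contains every
line `{(a,b,0) + t (b^p, v, 1)}` with `a, v ∈ F_p` (i.e. fixed by Frobenius) and `b ∈ F_{p^2}`. -/
theorem heisenberg_contains_lines (p : ℕ) [Fact p.Prime]
    (a v b : GaloisField p 2) (ha : a ^ p = a) (hv : v ^ p = v)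
    (t : GaloisField p 2) :
    (a + t * b ^ p) - (a + t * b ^ p) ^ p
      + (b + t * v) * t ^ p - t * (b + t * v) ^ p = 0 :=
  heisenberg_eq_zero_of_frobenius_fixed p ha hv (GaloisField.pow_prime_pow_prime p b) t
end

section
/- The number of F_{p^2}-rational points on the Heisenberg surface {(x,y,z) : x - x^p + y z^p - z y^p = 0} is exactly p^5. -/
/-!
Over a field `K` with `p ^ 2` elements the Frobenius `x ↦ x ^ p` is an involution. The
Artin–Schreier map `℘ x = x ^ p - x` is additive with kernel `𝔽_p`, so its image has `p`
elements; since `(℘ x) ^ p = -℘ x`, that image is the whole `p`-element set `{c | c ^ p = -c}`,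
and every fibre over it has `p` elements. The surface is `℘ x = B y z` with
`B y z = y * z ^ p - z * y ^ p`, and `(B y z) ^ p = -B y z`, so each of the `p ^ 4` pairs `(y, z)`
lies under exactly `p` points.
-/

open Polynomial

lemma ncard_setOf_pow_eq_neg_le {R : Type*} [CommRing R] [IsDomain R] {n : ℕ} (hn : 1 < n) :
    {x : R | x ^ n = -x}.ncard ≤ n := by
  have hdeg : (X ^ n + X : R[X]).natDegree = n := by
    rw [natDegree_add_eq_left_of_natDegree_lt] <;> simp [hn]
  have hne : (X ^ n + X : R[X]) ≠ 0 := by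
    rintro h
    rw [h, natDegree_zero] at hdeg
    omega
  calc {x : R | x ^ n = -x}.ncard ≤ ((X ^ n + X : R[X]).rootSet R).ncard := by
        refine Set.ncard_le_ncard (fun x hx => ?_) (Finset.finite_toSet _)
        simp_all [mem_rootSet']
    _ ≤ n := (ncard_rootSet_le _ _).trans_eq hdeg

lemma pow_pow_eq_self_of_card_eq_sq {K : Type*} [GroupWithZero K] [Finite K] {q : ℕ}
    (hK : Nat.card K = q ^ 2) (x : K) : (x ^ q) ^ q = x := by
  have := Fintype.ofFinite K
  rw [← pow_mul, ← sq, ← hK, Nat.card_eq_fintype_card, FiniteField.pow_card]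

def artinSchreier (K : Type*) [Field K] (p : ℕ) [Fact p.Prime] [CharP K p] : K →+ K where
  toFun x := x ^ p - x
  map_zero' := by simp [(Fact.out : p.Prime).ne_zero]
  map_add' x y := by
    simp only [add_pow_char]
    ring

section

variable {K : Type*} [Field K] {p : ℕ} [Fact p.Prime] [CharP K p]

@[simp]
lemma artinSchreier_apply (x : K) : artinSchreier K p x = x ^ p - x := rfl

lemma card_ker_artinSchreier : Nat.card (artinSchreier K p).ker = p := by
  refine (Nat.card_congr <| Equiv.subtypeEquivRight fun x => ?_).trans (Subfield.card_bot K p)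
  rw [AddMonoidHom.mem_ker, artinSchreier_apply, sub_eq_zero, Subfield.mem_bot_iff_pow_eq_self]

lemma card_range_artinSchreier_mul :
    Nat.card (artinSchreier K p).range * p = Nat.card K := by
  rw [← AddSubgroup.index_ker, ← AddSubgroup.card_mul_index (artinSchreier K p).ker,
    card_ker_artinSchreier, mul_comm]

lemma card_artinSchreier_preimage {c : K} (hc : c ∈ (artinSchreier K p).range) :
    Nat.card (artinSchreier K p ⁻¹' {c}) = p := by
  obtain ⟨x, rfl⟩ := hc
  rw [Nat.card_congr ((artinSchreier K p).fiberEquivKer x), card_ker_artinSchreier]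

lemma mem_range_artinSchreier_iff [Finite K] (hK : Nat.card K = p ^ 2) {c : K} :
    c ∈ (artinSchreier K p).range ↔ c ^ p = -c := by
  have hp : p.Prime := Fact.out
  have hsub : ((artinSchreier K p).range : Set K) ⊆ {c | c ^ p = -c} := by
    rintro _ ⟨x, rfl⟩
    change (x ^ p - x) ^ p = -(x ^ p - x)
    rw [sub_pow_char, pow_pow_eq_self_of_card_eq_sq hK, neg_sub]
  have hcard : ((artinSchreier K p).range : Set K).ncard = p := by
    have h := card_range_artinSchreier_mul (K := K) (p := p)
    rw [hK, sq] at h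
    rw [← Nat.card_coe_set_eq]
    exact Nat.eq_of_mul_eq_mul_right hp.pos h
  have hle := (ncard_setOf_pow_eq_neg_le (R := K) hp.one_lt).trans_eq hcard.symm
  exact Set.ext_iff.mp (Set.eq_of_subset_of_ncard_le hsub hle) c

lemma heisenberg_form_pow_char [Finite K] (hK : Nat.card K = p ^ 2) (y z : K) :
    (y * z ^ p - z * y ^ p) ^ p = -(y * z ^ p - z * y ^ p) := by
  rw [sub_pow_char, mul_pow, mul_pow, pow_pow_eq_self_of_card_eq_sq hK,
    pow_pow_eq_self_of_card_eq_sq hK]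
  ring

def heisenbergSurfaceEquivSigma :
    {w : K × K × K // w.1 - w.1 ^ p + w.2.1 * w.2.2 ^ p - w.2.2 * w.2.1 ^ p = 0} ≃
      Σ yz : K × K, (artinSchreier K p ⁻¹' {yz.1 * yz.2 ^ p - yz.2 * yz.1 ^ p}) where
  toFun w := ⟨w.1.2, w.1.1, by
    simp only [Set.mem_preimage, artinSchreier_apply, Set.mem_singleton_iff]
    linear_combination -w.2⟩
  invFun s := ⟨(s.2, s.1), by
    have h : s.2.1 ^ p - s.2.1 = _ := s.2.2
    linear_combination -h⟩
  left_inv _ := rfl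
  right_inv _ := rfl

theorem card_heisenberg_surface [Finite K] (hK : Nat.card K = p ^ 2) :
    Nat.card {w : K × K × K // w.1 - w.1 ^ p + w.2.1 * w.2.2 ^ p - w.2.2 * w.2.1 ^ p = 0} =
      p ^ 5 := by
  have := Fintype.ofFinite K
  have hfiber (yz : K × K) :
      Nat.card (artinSchreier K p ⁻¹' {yz.1 * yz.2 ^ p - yz.2 * yz.1 ^ p}) = p :=
    card_artinSchreier_preimage <|
      (mem_range_artinSchreier_iff hK).mpr (heisenberg_form_pow_char hK _ _)
  rw [Nat.card_congr heisenbergSurfaceEquivSigma, Nat.card_sigma]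
  simp only [hfiber, Finset.sum_const, Finset.card_univ, smul_eq_mul]
  rw [← Nat.card_eq_fintype_card, Nat.card_prod, hK]
  ring

end

/-- The Heisenberg surface `x - x^p + y z^p - z y^p = 0` has exactly `p^5` points
over `F_{p^2}`. -/
theorem heisenberg_card (p : ℕ) [Fact p.Prime] :
    Nat.card {w : GaloisField p 2 × GaloisField p 2 × GaloisField p 2 //
      w.1 - w.1 ^ p + w.2.1 * w.2.2 ^ p - w.2.2 * w.2.1 ^ p = 0} = p ^ 5 :=
  card_heisenberg_surface (GaloisField.card p 2 two_ne_zero)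
end

section
/- A plane curve of degree d over a finite field F has at most d(|F| + 1) rational points. -/
open MvPolynomial
open scoped LinearAlgebra.Projectivization

/-!
Let `q = |F|`. If `P v ≠ 0` for some `v`, every nonzero zero `u` of `P` can be written as
`u = w + t • v` with `w ≠ 0` on a fixed hyperplane not containing `v`. On the line `t ↦ w + t • v`
the restriction of `P` is a polynomial in `t` of degree at most `d` whose `t ^ d`-coefficient is
`P v ≠ 0`, so it has at most `d` roots. Hence `P` has at most `(q ^ 2 - 1) d` nonzero zeros, and
these are exactly the `q - 1` nonzero multiples of the representatives of the projective zeros.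
If `P` vanishes on all of `F ^ 3`, then `d > q`, and the bound exceeds the `q ^ 2 + q + 1` points
of the plane.
-/

theorem Projectivization.ncard_setOf_mk_mem {k V : Type*} [DivisionRing k] [AddCommGroup V]
    [Module k V] (S : Set (ℙ k V)) :
    {v : V | ∃ hv : v ≠ 0, mk k v hv ∈ S}.ncard = S.ncard * (Nat.card k - 1) := by
  rw [← Nat.card_coe_set_eq, ← Nat.card_coe_set_eq S, ← Nat.card_units k, ← Nat.card_prod]
  exact Nat.card_congr <| (Equiv.subtypeSubtypeEquivSubtypeExists _ _).symm.trans <|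
    ((nonZeroEquivProjectivizationProdUnits k V).subtypeEquiv fun _ => Iff.rfl).trans
      Equiv.prodSubtypeFstEquivSubtypeProd

namespace Polynomial

variable {R ι : Type*} [CommSemiring R]

theorem natDegree_prod_pow_le_of_natDegree_le_one (s : Finset ι) (f : ι → R[X]) (m : ι → ℕ)
    (hf : ∀ i ∈ s, (f i).natDegree ≤ 1) :
    (∏ i ∈ s, f i ^ m i).natDegree ≤ ∑ i ∈ s, m i :=
  (natDegree_prod_le _ _).trans <| Finset.sum_le_sum fun i hi =>
    (natDegree_pow_le_of_le _ (hf i hi)).trans (mul_one _).le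

theorem coeff_prod_pow_of_natDegree_le_one (s : Finset ι) (f : ι → R[X]) (m : ι → ℕ)
    (hf : ∀ i ∈ s, (f i).natDegree ≤ 1) :
    (∏ i ∈ s, f i ^ m i).coeff (∑ i ∈ s, m i) = ∏ i ∈ s, (f i).coeff 1 ^ m i := by
  -- each power `f i ^ m i` becomes `m i` factors of degree at most one
  have expand : ∀ {M : Type _} [CommMonoid M] (g : ι → M),
      ∏ i ∈ s, g i ^ m i = ∏ x ∈ s.sigma fun i => Finset.range (m i), g x.1 := by
    intro M _ g
    simp [Finset.prod_sigma]
  have hcard : ∑ i ∈ s, m i = (s.sigma fun i => Finset.range (m i)).card * 1 := by simp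
  rw [expand, expand, hcard, coeff_prod_of_natDegree_le]
  exact fun x hx => hf x.1 (Finset.mem_sigma.mp hx).1

end Polynomial

namespace MvPolynomial

section CommSemiring

variable {R σ : Type*} [CommSemiring R] {P : MvPolynomial σ R} {d : ℕ}

theorem IsHomogeneous.eval_smul (hP : P.IsHomogeneous d) (a : R) (v : σ → R) :
    eval (a • v) P = a ^ d * eval v P := by
  simp only [eval_eq, Finset.mul_sum]
  refine Finset.sum_congr rfl fun m hm => ?_
  simp only [Pi.smul_apply, smul_eq_mul, mul_pow, Finset.prod_mul_distrib,
    Finset.prod_pow_eq_pow_sum, ← hP.degree_eq_sum_deg_support hm]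
  ring

noncomputable def restrictLine (P : MvPolynomial σ R) (w v : σ → R) : Polynomial R :=
  aeval (fun i => Polynomial.C (v i) * Polynomial.X + Polynomial.C (w i)) P

theorem eval_restrictLine (P : MvPolynomial σ R) (w v : σ → R) (t : R) :
    (P.restrictLine w v).eval t = eval (w + t • v) P := by
  rw [restrictLine, ← Polynomial.coe_aeval_eq_eval, ← AlgHom.comp_apply, comp_aeval,
    ← coe_aeval_eq_eval]
  refine congrArg (fun f => aeval f P) ?_
  ext i
  simp only [Polynomial.aeval_add, Polynomial.aeval_mul, Polynomial.aeval_C, Polynomial.aeval_X,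
    Algebra.algebraMap_self, RingHom.id_apply, Pi.add_apply, Pi.smul_apply, smul_eq_mul]
  ring

theorem restrictLine_eq_sum (P : MvPolynomial σ R) (w v : σ → R) :
    P.restrictLine w v = ∑ m ∈ P.support, Polynomial.C (coeff m P) *
      ∏ i ∈ m.support, (Polynomial.C (v i) * Polynomial.X + Polynomial.C (w i)) ^ m i := by
  rw [restrictLine, aeval_eq_eval₂Hom, coe_eval₂Hom, eval₂_eq]
  rfl

theorem IsHomogeneous.natDegree_restrictLine_le (hP : P.IsHomogeneous d) (w v : σ → R) :
    (P.restrictLine w v).natDegree ≤ d := by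
  rw [restrictLine_eq_sum]
  refine Polynomial.natDegree_sum_le_of_forall_le _ _ fun m hm =>
    (Polynomial.natDegree_C_mul_le _ _).trans ?_
  rw [hP.degree_eq_sum_deg_support hm]
  exact Polynomial.natDegree_prod_pow_le_of_natDegree_le_one _ _ _ fun i _ =>
    Polynomial.natDegree_linear_le

theorem IsHomogeneous.coeff_restrictLine (hP : P.IsHomogeneous d) (w v : σ → R) :
    (P.restrictLine w v).coeff d = eval v P := by
  rw [restrictLine_eq_sum, Polynomial.finsetSum_coeff, eval_eq]
  refine Finset.sum_congr rfl fun m hm => ?_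
  rw [Polynomial.coeff_C_mul, hP.degree_eq_sum_deg_support hm,
    Polynomial.coeff_prod_pow_of_natDegree_le_one _ _ _ fun i _ => Polynomial.natDegree_linear_le]
  simp

end CommSemiring

section Field

variable {F σ : Type*} [Field F] {P : MvPolynomial σ F} {d : ℕ}

theorem IsHomogeneous.ncard_setOf_eval_add_smul_eq_zero_le (hP : P.IsHomogeneous d)
    {v : σ → F} (hv : eval v P ≠ 0) (w : σ → F) :
    {t : F | eval (w + t • v) P = 0}.ncard ≤ d := by
  classical
  have hne : P.restrictLine w v ≠ 0 := fun h => hv <| by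
    rw [← hP.coeff_restrictLine w v, h, Polynomial.coeff_zero]
  calc {t : F | eval (w + t • v) P = 0}.ncard
      ≤ ((P.restrictLine w v).roots.toFinset : Set F).ncard :=
        Set.ncard_le_ncard (fun t ht => by simpa [hne, eval_restrictLine] using ht)
          (Finset.finite_toSet _)
    _ ≤ (P.restrictLine w v).roots.card := by
        rw [Set.ncard_coe_finset]; exact Multiset.toFinset_card_le _
    _ ≤ d := (Polynomial.card_roots' _).trans (hP.natDegree_restrictLine_le w v)

theorem IsHomogeneous.ncard_nonzero_zeros_le_of_apply_ne_zero [Fintype σ] [Fintype F]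
    (hP : P.IsHomogeneous d) {v : σ → F} (hv : eval v P ≠ 0) {i : σ} (hvi : v i ≠ 0) :
    {u : σ → F | u ≠ 0 ∧ eval u P = 0}.ncard ≤
      (Fintype.card F ^ (Fintype.card σ - 1) - 1) * d := by
  classical
  let W : Finset (σ → F) := ({w | w i = 0} : Finset _).erase 0
  have hW : W.card = Fintype.card F ^ (Fintype.card σ - 1) - 1 := by
    rw [Finset.card_erase_of_mem (by simp), ← Fintype.piFinset_univ,
      Fintype.card_filter_piFinset_const_eq_of_mem _ _ (Finset.mem_univ (0 : F)), Finset.card_univ]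
  have hcover : {u : σ → F | u ≠ 0 ∧ eval u P = 0} ⊆
      ⋃ w ∈ W, (fun t : F => w + t • v) '' {t : F | eval (w + t • v) P = 0} := by
    rintro u ⟨hu, huP⟩
    set t := u i / v i
    have hw : (u - t • v) i = 0 := by simp [t, hvi]
    have hw0 : u - t • v ≠ 0 := by
      intro h
      rw [sub_eq_zero] at h
      have ht : t ≠ 0 := by rintro ht; exact hu (by rw [h, ht, zero_smul])
      rw [h, hP.eval_smul] at huP
      exact mul_ne_zero (pow_ne_zero _ ht) hv huP
    simp only [Set.mem_iUnion]
    exact ⟨u - t • v, by simp [W, hw, hw0], t, by simpa using huP, sub_add_cancel _ _⟩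
  calc _ ≤ (⋃ w ∈ W, (fun t : F => w + t • v) '' {t : F | eval (w + t • v) P = 0}).ncard :=
        Set.ncard_le_ncard hcover (Set.toFinite _)
    _ ≤ ∑ w ∈ W, ((fun t : F => w + t • v) '' {t : F | eval (w + t • v) P = 0}).ncard :=
        Finset.set_ncard_biUnion_le _ _
    _ ≤ ∑ _w ∈ W, d := Finset.sum_le_sum fun w _ =>
        (Set.ncard_image_le (Set.toFinite _)).trans (hP.ncard_setOf_eval_add_smul_eq_zero_le hv w)
    _ = _ := by rw [Finset.sum_const, hW, smul_eq_mul]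

theorem IsHomogeneous.ncard_nonzero_zeros_le [Fintype σ] [Fintype F]
    (hP : P.IsHomogeneous d) {v : σ → F} (hv : eval v P ≠ 0) :
    {u : σ → F | u ≠ 0 ∧ eval u P = 0}.ncard ≤
      (Fintype.card F ^ (Fintype.card σ - 1) - 1) * d := by
  rcases eq_or_ne v 0 with rfl | hv0
  · have hnowhere : ∀ u, eval u P ≠ 0 := fun u h => hv (by simpa [h] using hP.eval_smul 0 u)
    simp [hnowhere]
  · obtain ⟨i, hi⟩ := Function.ne_iff.mp hv0
    exact hP.ncard_nonzero_zeros_le_of_apply_ne_zero hv hi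

theorem IsHomogeneous.eval_rep_mk_eq_zero_iff (hP : P.IsHomogeneous d) {u : σ → F}
    (hu : u ≠ 0) : eval (Projectivization.mk F u hu).rep P = 0 ↔ eval u P = 0 := by
  obtain ⟨a, ha⟩ := Projectivization.exists_smul_eq_mk_rep F u hu
  rw [← ha, Units.smul_def, hP.eval_smul, mul_eq_zero_iff_left (pow_ne_zero _ a.ne_zero)]

theorem IsHomogeneous.ncard_nonzero_zeros_eq (hP : P.IsHomogeneous d) :
    {u : σ → F | u ≠ 0 ∧ eval u P = 0}.ncard =
      {x : ℙ F (σ → F) | eval x.rep P = 0}.ncard * (Nat.card F - 1) := by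
  rw [← Projectivization.ncard_setOf_mk_mem]
  congr 1
  ext u
  exact ⟨fun ⟨hu, h⟩ => ⟨hu, (hP.eval_rep_mk_eq_zero_iff hu).2 h⟩,
    fun ⟨hu, h⟩ => ⟨hu, (hP.eval_rep_mk_eq_zero_iff hu).1 h⟩⟩

end Field

end MvPolynomial

/-- A plane projective curve of degree `d` over a finite field `F` has at most
`d(|F|+1)` rational points. -/
theorem plane_curve_point_bound (F : Type*) [Field F] [Fintype F]
    (P : MvPolynomial (Fin 3) F) (hP : P ≠ 0) (d : ℕ) (hd : P.IsHomogeneous d) :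
    {x : ℙ F (Fin 3 → F) | eval x.rep P = 0}.ncard ≤ d * (Fintype.card F + 1) := by
  have hq : 1 < Fintype.card F := Fintype.one_lt_card
  by_cases hzero : ∀ v, eval v P = 0
  · have hdq : Fintype.card F < d := by
      by_contra! h
      exact hP (hd.eq_zero_of_forall_eval_eq_zero_of_le_card hzero (by simpa using h))
    calc _ ≤ Nat.card (ℙ F (Fin 3 → F)) := Set.ncard_le_card _
      _ = 1 + Fintype.card F + Fintype.card F ^ 2 := by
        rw [Projectivization.card_of_finrank F _ (Module.finrank_fin_fun F),
          Nat.card_eq_fintype_card]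
        simp [Finset.sum_range_succ]
      _ ≤ d * (Fintype.card F + 1) := by nlinarith
  · push Not at hzero
    obtain ⟨v, hv⟩ := hzero
    have hbound := hd.ncard_nonzero_zeros_le hv
    have hfactor : Fintype.card F ^ (3 - 1) - 1 = (Fintype.card F + 1) * (Fintype.card F - 1) := by
      simpa using Nat.sq_sub_sq (Fintype.card F) 1
    rw [hd.ncard_nonzero_zeros_eq, Nat.card_eq_fintype_card, Fintype.card_fin, hfactor] at hbound
    exact Nat.le_of_mul_le_mul_right (hbound.trans_eq (by ring)) (Nat.sub_pos_of_lt hq)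
end

section
/- The plane curve over F_3 cut out by the homogeneous polynomial x^3 y + y^3 z + z^3 x is flexy: at every smooth point, the tangent line meets the curve with intersection multiplicity at least 3. -/
/-!
In characteristic 3 the Frobenius gives `(a + t b)^3 = a^3 + t^3 b^3`, so the restriction
`t ↦ F(v + t w)` of `F = x^3 y + y^3 z + z^3 x` to a line has no `t^2` term. Its constant term is
`F(v)` and its linear term is `∇F(v) · w`, so both vanish for a tangent line at a point of the
curve, leaving `t^3` as a factor.
-/

open MvPolynomial

theorem Polynomial.eq_zero_or_le_rootMultiplicity_zero_of_X_pow_dvd {R : Type*} [CommRing R]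
    {p : Polynomial R} {n : ℕ} (h : X ^ n ∣ p) : p = 0 ∨ n ≤ p.rootMultiplicity 0 :=
  or_iff_not_imp_left.2 fun hp => (le_rootMultiplicity_iff hp).2 (by simpa using h)

namespace FunnyCurve

variable (R : Type*) [CommRing R]

noncomputable def funnyPoly : MvPolynomial (Fin 3) R :=
  X 0 ^ 3 * X 1 + X 1 ^ 3 * X 2 + X 2 ^ 3 * X 0

variable {R} [CharP R 3]

theorem sum_mul_eval_pderiv_funnyPoly (v w : Fin 3 → R) :
    ∑ i, w i * eval v (pderiv i (funnyPoly R)) =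
      w 0 * v 2 ^ 3 + w 1 * v 0 ^ 3 + w 2 * v 1 ^ 3 := by
  have h3 : (3 : R) = 0 := by exact_mod_cast CharP.cast_eq_zero R 3
  simp [funnyPoly, Fin.sum_univ_three, pderiv_X, h3]

theorem aeval_line_funnyPoly (v w : Fin 3 → R) :
    aeval (fun i => Polynomial.C (v i) + Polynomial.X * Polynomial.C (w i)) (funnyPoly R) =
      Polynomial.C (eval v (funnyPoly R)) +
        Polynomial.X * Polynomial.C (∑ i, w i * eval v (pderiv i (funnyPoly R))) +
        Polynomial.X ^ 3 * Polynomial.C (w 0 ^ 3 * v 1 + w 1 ^ 3 * v 2 + w 2 ^ 3 * v 0) +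
        Polynomial.X ^ 4 * Polynomial.C (eval w (funnyPoly R)) := by
  rw [sum_mul_eval_pderiv_funnyPoly]
  simp only [funnyPoly, map_add, map_mul, map_pow, aeval_X, eval_X, add_pow_char]
  ring

theorem X_pow_three_dvd_aeval_line_funnyPoly {v w : Fin 3 → R}
    (hv : eval v (funnyPoly R) = 0) (hw : ∑ i, w i * eval v (pderiv i (funnyPoly R)) = 0) :
    Polynomial.X ^ 3 ∣
      aeval (fun i => Polynomial.C (v i) + Polynomial.X * Polynomial.C (w i)) (funnyPoly R) := by
  rw [aeval_line_funnyPoly, hv, hw]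
  simp only [map_zero, mul_zero, add_zero, zero_add]
  exact Dvd.dvd.add (dvd_mul_right _ _) (dvd_mul_of_dvd_left (pow_dvd_pow _ (by norm_num)) _)

end FunnyCurve

/-- The "funny curve" `x^3 y + y^3 z + z^3 x = 0` over (the algebraic closure of)
`F_3` is flexy: at every smooth point, the tangent line meets the curve with
intersection multiplicity at least 3. Smooth points are nonzero vectors `v` on the
curve with nonvanishing gradient; tangent directions are `w` with `∇F(v)·w = 0`, and
the multiplicity is the order of vanishing at `t = 0` of `t ↦ F(v + t w)`. -/
theorem funny_curve_flexy :
    ∀ v w : Fin 3 → AlgebraicClosure (ZMod 3),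
      (eval v (X 0 ^ 3 * X 1 + X 1 ^ 3 * X 2 + X 2 ^ 3 * X 0 :
          MvPolynomial (Fin 3) (AlgebraicClosure (ZMod 3))) = 0) →
      (∃ i, eval v (pderiv i (X 0 ^ 3 * X 1 + X 1 ^ 3 * X 2 + X 2 ^ 3 * X 0)) ≠ 0) →
      w ≠ 0 →
      (∑ i, w i * eval v (pderiv i (X 0 ^ 3 * X 1 + X 1 ^ 3 * X 2 + X 2 ^ 3 * X 0)) = 0) →
      (aeval (fun i => Polynomial.C (v i) + Polynomial.X * Polynomial.C (w i))
          (X 0 ^ 3 * X 1 + X 1 ^ 3 * X 2 + X 2 ^ 3 * X 0 :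
            MvPolynomial (Fin 3) (AlgebraicClosure (ZMod 3))) = 0) ∨
        3 ≤ Polynomial.rootMultiplicity 0
          (aeval (fun i => Polynomial.C (v i) + Polynomial.X * Polynomial.C (w i))
            (X 0 ^ 3 * X 1 + X 1 ^ 3 * X 2 + X 2 ^ 3 * X 0 :
              MvPolynomial (Fin 3) (AlgebraicClosure (ZMod 3)))) := by
  intro v w hv _ _ hw
  exact Polynomial.eq_zero_or_le_rootMultiplicity_zero_of_X_pow_dvd
    (FunnyCurve.X_pow_three_dvd_aeval_line_funnyPoly hv hw)
end
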